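/- arXiv:2508.01229 — 4 statements merged into one kernel-verified Lean document; each statement's English description precedes it below -/
import Mathlib

section
/- The function F(x) = |sin(πx/λ) / sin(πx/(Nλ))| defined for x ∈ (0, λ) is continuous on (0,λ), F(x) → N as x → 0+, F(λ⁻) → 0, and F is strictly decreasing on (0, λ] when N ≥ 2, restricted to x ∈ (0, λ] where sin(πx/(Nλ)) > 0. -/
open Real

private lemma sin_mul_sum_cos (N : ℕ) (v : ℝ) :
    Real.sin v * ∑ k ∈ Finset.range N, Real.cos ((2*(k:ℝ)+1-N) * v)
      = Real.sin ((N:ℝ) * v) := by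
  have h : ∀ k ∈ Finset.range N,
      Real.sin v * Real.cos ((2*(k:ℝ)+1-N) * v)
        = (fun k : ℕ => Real.sin ((2*(k:ℝ)-N)*v)/2) (k+1)
          - (fun k : ℕ => Real.sin ((2*(k:ℝ)-N)*v)/2) k := by
    intro k _
    simp only
    push_cast
    have h1 : (2*((k:ℝ)+1)-N)*v = (2*(k:ℝ)+1-N)*v + v := by ring
    have h2 : (2*(k:ℝ)-N)*v = (2*(k:ℝ)+1-N)*v - v := by ring
    rw [h1, h2, Real.sin_add, Real.sin_sub]; ring
  rw [Finset.mul_sum, Finset.sum_congr rfl h,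
    Finset.sum_range_sub (f := fun k : ℕ => Real.sin ((2*(k:ℝ)-N)*v)/2)]
  rw [show (2*((0:ℕ):ℝ)-N)*v = -((N:ℝ)*v) by push_cast; ring, Real.sin_neg,
      show (2*((N:ℕ):ℝ)-N)*v = (N:ℝ)*v by push_cast; ring]
  ring

/-- Properties of the Dirichlet kernel magnitude
`F(x) = |sin(πx/λ)| / |sin(πx/(Nλ))|` on `(0, λ)`:
continuity on `(0,λ)`, limit `N` as `x → 0⁺`, limit `0` as `x → λ⁻`,
and strict decrease on `(0, λ]` for `N ≥ 2`. -/
theorem stmt_3 (N : ℕ) (hN : 2 ≤ N) (lam : ℝ) (hlam : 0 < lam)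
    (F : ℝ → ℝ)
    (hF : ∀ x, F x = |Real.sin (π * x / lam)| / |Real.sin (π * x / (N * lam))|) :
    ContinuousOn F (Set.Ioo 0 lam) ∧
    Filter.Tendsto F (nhdsWithin 0 (Set.Ioi 0)) (nhds (N : ℝ)) ∧
    Filter.Tendsto F (nhdsWithin lam (Set.Iio lam)) (nhds 0) ∧
    StrictAntiOn F (Set.Ioc 0 lam) := by
  have hNR : (0:ℝ) < N := by positivity
  have hN1 : (1:ℝ) ≤ (N:ℝ) - 1 := by
    have : (2:ℝ) ≤ N := by exact_mod_cast hN
    linarith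
  have hNlam : (0:ℝ) < N * lam := by positivity
  set u : ℝ → ℝ := fun x => π * x / (N * lam) with hu
  set G : ℝ → ℝ := fun x => ∑ k ∈ Finset.range N, Real.cos ((2*(k:ℝ)+1-N) * u x) with hG
  have hu_pos : ∀ x : ℝ, 0 < x → 0 < u x := fun x hx => by
    simp only [hu]; positivity
  have hu_mono : ∀ x y : ℝ, x < y → u x < u y := by
    intro x y hxy
    simp only [hu]
    have := pi_pos
    gcongr
  have hu_le : ∀ x : ℝ, x ≤ lam → u x ≤ π / N := by
    intro x hx
    simp only [hu]
    rw [div_le_div_iff₀ hNlam hNR]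
    have h := mul_le_mul_of_nonneg_left hx (by positivity : (0:ℝ) ≤ π * N)
    nlinarith
  have hpiN_lt : π / N < π := by
    rw [div_lt_iff₀ hNR]
    nlinarith [pi_pos]
  have hNu : ∀ x : ℝ, π * x / lam = (N:ℝ) * u x := by
    intro x; simp only [hu]; field_simp
  have hbound : ((N:ℝ) - 1) * (π / N) ≤ π := by
    rw [mul_div_assoc', div_le_iff₀ hNR]
    nlinarith [pi_pos]
  -- F = G on Ioc 0 lam
  have hFG : ∀ x ∈ Set.Ioc 0 lam, F x = G x := by
    intro x hx
    have h1 : 0 < u x := hu_pos x hx.1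
    have h2 : u x < π := lt_of_le_of_lt (hu_le x hx.2) hpiN_lt
    have hsin : 0 < Real.sin (u x) := Real.sin_pos_of_pos_of_lt_pi h1 h2
    have hnum : 0 ≤ Real.sin (π * x / lam) := by
      apply Real.sin_nonneg_of_nonneg_of_le_pi
      · exact div_nonneg (by nlinarith [pi_pos, hx.1] : (0:ℝ) ≤ π * x) hlam.le
      · rw [div_le_iff₀ hlam]; nlinarith [pi_pos, hx.1, hx.2]
    have hux : π * x / ((N:ℝ) * lam) = u x := rfl
    rw [hF x, hux, abs_of_nonneg hnum, abs_of_pos hsin, hNu x,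
      ← _root_.sin_mul_sum_cos N (u x), mul_comm, mul_div_assoc, div_self hsin.ne', mul_one]
  -- G is continuous
  have hG_cont : Continuous G := by
    apply continuous_finset_sum
    intro k _
    exact Real.continuous_cos.comp (by simp only [hu]; fun_prop)
  -- G 0 = N
  have hG0 : G 0 = N := by
    simp [hG, hu]
  -- strict anti of G on Ioc
  have hG_anti : StrictAntiOn G (Set.Ioc 0 lam) := by
    intro x hx y hy hxy
    have hux : 0 < u x := hu_pos x hx.1
    have huxy : u x < u y := hu_mono x y hxy
    have huy : u y ≤ π / N := hu_le y hy.2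
    have key : ∀ c : ℝ, 1 ≤ |c| → |c| ≤ (N:ℝ) - 1 →
        Real.cos (c * u y) < Real.cos (c * u x) := by
      intro c h1c h2c
      have hc0 : 0 < |c| := by linarith
      have hx' : Real.cos (c * u x) = Real.cos (|c| * u x) := by
        rw [← Real.cos_abs (c * u x), abs_mul, abs_of_pos hux]
      have hy' : Real.cos (c * u y) = Real.cos (|c| * u y) := by
        rw [← Real.cos_abs (c * u y), abs_mul, abs_of_pos (lt_trans hux huxy)]
      rw [hx', hy']
      apply Real.cos_lt_cos_of_nonneg_of_le_pi
      · positivity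
      · calc |c| * u y ≤ ((N:ℝ) - 1) * (π / N) :=
              mul_le_mul h2c huy (le_of_lt (lt_trans hux huxy)) (by linarith)
          _ ≤ π := hbound
      · exact (mul_lt_mul_iff_right₀ hc0).mpr huxy
    have hsum : G y < G x := by
      simp only [hG]
      apply Finset.sum_lt_sum
      · intro k hk
        rcases eq_or_ne (2*(k:ℝ)+1-N) 0 with h0 | h0
        · rw [h0]; simp
        · apply le_of_lt
          apply key
          · have hz : (2*(k:ℝ)+1-N) = ((2*(k:ℤ)+1-(N:ℤ) : ℤ):ℝ) := by push_cast; ring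
            rw [hz] at h0 ⊢
            rw [← Int.cast_abs]
            have hz0 : 2*(k:ℤ)+1-(N:ℤ) ≠ 0 := by exact_mod_cast h0
            exact_mod_cast Int.one_le_abs hz0
          · have hkN : (k:ℝ) + 1 ≤ N := by exact_mod_cast Finset.mem_range.mp hk
            have hk0 : (0:ℝ) ≤ (k:ℝ) := Nat.cast_nonneg k
            rw [abs_le]
            constructor <;> linarith
      · refine ⟨0, Finset.mem_range.mpr (by omega), ?_⟩
        apply key
        · push_cast
          rw [show |2*(0:ℝ)+1-(N:ℝ)| = (N:ℝ) - 1 by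
            rw [abs_of_nonpos (by linarith)]; ring]
          linarith
        · push_cast
          rw [show |2*(0:ℝ)+1-(N:ℝ)| = (N:ℝ) - 1 by
            rw [abs_of_nonpos (by linarith)]; ring]
    exact hsum
  -- assemble
  have hFfun : F = fun x => |Real.sin (π * x / lam)| / |Real.sin (π * x / ((N:ℝ) * lam))| :=
    funext hF
  have hdenne : ∀ x : ℝ, x ∈ Set.Ioo 0 lam → |Real.sin (π * x / ((N:ℝ) * lam))| ≠ 0 := by
    intro x hx
    have h1 : 0 < u x := hu_pos x hx.1
    have h2 : u x < π := lt_of_le_of_lt (hu_le x hx.2.le) hpiN_lt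
    have : π * x / ((N:ℝ) * lam) = u x := rfl
    rw [this, abs_ne_zero]
    exact (Real.sin_pos_of_pos_of_lt_pi h1 h2).ne'
  refine ⟨?_, ?_, ?_, ?_⟩
  · -- continuity
    rw [hFfun]
    apply ContinuousOn.div
    · fun_prop
    · fun_prop
    · exact hdenne
  · -- tendsto at 0+
    have hmem : Set.Ioc 0 lam ∈ nhdsWithin 0 (Set.Ioi 0) := by
      rw [mem_nhdsWithin]
      exact ⟨Set.Iio lam, isOpen_Iio, hlam, fun z hz => ⟨hz.2, le_of_lt hz.1⟩⟩
    have h0 : Filter.Tendsto G (nhdsWithin 0 (Set.Ioi 0)) (nhds (N:ℝ)) := by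
      rw [← hG0]
      exact (hG_cont.tendsto 0).mono_left nhdsWithin_le_nhds
    exact Filter.Tendsto.congr'
      (Filter.eventuallyEq_of_mem hmem (fun x hx => (hFG x hx).symm)) h0
  · -- tendsto at lam⁻
    have hden : |Real.sin (π * lam / ((N:ℝ) * lam))| ≠ 0 := by
      have : π * lam / ((N:ℝ) * lam) = π / N := by field_simp
      rw [this, abs_ne_zero]
      exact (Real.sin_pos_of_pos_of_lt_pi (by positivity) hpiN_lt).ne'
    have hcont : ContinuousAt
        (fun x => |Real.sin (π * x / lam)| / |Real.sin (π * x / ((N:ℝ) * lam))|) lam :=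
      ContinuousAt.div (by fun_prop) (by fun_prop) hden
    have ht := hcont.tendsto.mono_left (nhdsWithin_le_nhds (s := Set.Iio lam))
    have hval : |Real.sin (π * lam / lam)| / |Real.sin (π * lam / ((N:ℝ) * lam))| = 0 := by
      rw [show π * lam / lam = π by field_simp]
      simp
    rw [hFfun]
    simpa [hval] using ht
  · exact fun x hx y hy hxy => by rw [hFG x hx, hFG y hy]; exact hG_anti hx hy hxy
end

section
/- (Theorem 1, small-aperture case) Let u, v ∈ ℝ³ be unit vectors with 0 < ‖u − v‖L < λ, λ > 0, N a positive integer. Then the minimum over t on the sphere ‖t‖ = L of f(t) = |∑_{n=1}^{N} exp(j·(2π/λ)·(n/N)·(u−v)^T t)| equals |sin(π‖u−v‖L/λ)| / |sin(π‖u−v‖L/(Nλ))|, attained at t = ±L(u−v)/‖u−v‖. -/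
/-!
Put `θ = π ⟪u - v, t⟫ / (N λ)`. The sum is a geometric series in `e^{2iθ}`, so
`f t = |sin (N θ)| / |sin θ|`, the modulus of a Dirichlet kernel. This is even in `θ` and, by
induction on `N` with the addition formula for `sin`, decreasing on `[0, θ₀]` whenever
`N θ₀ < π`. By Cauchy–Schwarz `|θ| ≤ θ₀ := π ‖u - v‖ L / (N λ)` on the sphere `‖t‖ = L`, with
equality at `t = ±L (u - v) / ‖u - v‖`, and `N θ₀ < π` is the small-aperture condition
`‖u - v‖ L < λ`.
-/

open Real

theorem sin_nat_mul_mul_sin_le (N : ℕ) {x y : ℝ} (hx : 0 ≤ x) (hxy : x ≤ y)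
    (hy : N * y ≤ π) : sin (N * y) * sin x ≤ sin (N * x) * sin y := by
  rcases Nat.eq_zero_or_pos N with rfl | hN
  · simp
  -- the step needs `cos y ≥ 0`, i.e. `2 y ≤ π`, so the induction starts at `N = 1`
  induction N, hN using Nat.le_induction with
  | base => simp [mul_comm]
  | succ k hk ih =>
    push_cast at hy ⊢
    have hk1 : (1 : ℝ) ≤ k := by exact_mod_cast hk
    have hy0 : 0 ≤ y := hx.trans hxy
    have hy2 : y ≤ π / 2 := by nlinarith
    have hky : k * y ≤ π := by nlinarith
    have hkxy : k * x ≤ k * y := by gcongr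
    have hsx : 0 ≤ sin x := sin_nonneg_of_nonneg_of_le_pi hx (by linarith [pi_pos])
    have hsy : 0 ≤ sin y := sin_nonneg_of_nonneg_of_le_pi hy0 (by linarith [pi_pos])
    have hcy : 0 ≤ cos y := cos_nonneg_of_mem_Icc ⟨by linarith [pi_pos], hy2⟩
    have hcos : cos y ≤ cos x := cos_le_cos_of_nonneg_of_le_pi hx (by linarith [pi_pos]) hxy
    have hskx : 0 ≤ sin (k * x) := sin_nonneg_of_nonneg_of_le_pi (by positivity) (hkxy.trans hky)
    have hcosk : cos (k * y) ≤ cos (k * x) :=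
      cos_le_cos_of_nonneg_of_le_pi (by positivity) hky hkxy
    rw [add_one_mul, add_one_mul, sin_add, sin_add]
    nlinarith [mul_le_mul_of_nonneg_left (ih hky) hcy,
      mul_le_mul_of_nonneg_right hcos (mul_nonneg hskx hsy),
      mul_le_mul_of_nonneg_right hcosk (mul_nonneg hsx hsy)]

noncomputable def dirichletNorm (N : ℕ) (θ : ℝ) : ℝ :=
  ‖∑ n ∈ Finset.Icc 1 N, Complex.exp (Complex.I * (2 * n * θ : ℝ))‖

theorem dirichletNorm_mul_abs_sin (N : ℕ) (θ : ℝ) :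
    dirichletNorm N θ * |sin θ| = |sin (N * θ)| := by
  set z := Complex.exp (Complex.I * (2 * θ : ℝ))
  have hpow (n : ℕ) : Complex.exp (Complex.I * (2 * n * θ : ℝ)) = z ^ n := by
    rw [← Complex.exp_nat_mul]; congr 1; push_cast; ring
  have hnorm_sub_one (n : ℕ) : ‖z ^ n - 1‖ = 2 * |sin (n * θ)| := by
    rw [← hpow, Complex.norm_exp_I_mul_ofReal_sub_one, norm_mul, Real.norm_eq_abs,
      Real.norm_eq_abs, show 2 * (n : ℝ) * θ / 2 = n * θ by ring]
    norm_num
  have hsum : ∑ n ∈ Finset.Icc 1 N, z ^ n = z * ∑ n ∈ Finset.range N, z ^ n := by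
    rw [← Finset.Ico_add_one_right_eq_Icc, Finset.sum_Ico_eq_sum_range, Finset.mul_sum]
    simp [pow_succ', add_comm 1]
  have hz : ‖z‖ = 1 := Complex.norm_exp_I_mul_ofReal _
  -- `(∑ z ^ n) (z - 1) = z (z ^ N - 1)` avoids dividing by `sin θ`
  have key : ‖∑ n ∈ Finset.Icc 1 N, z ^ n‖ * ‖z - 1‖ = ‖z ^ N - 1‖ := by
    rw [hsum, ← norm_mul, mul_assoc, geom_sum_mul, norm_mul, hz, one_mul]
  have h1 := hnorm_sub_one 1
  simp only [pow_one, Nat.cast_one, one_mul] at h1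
  rw [h1, hnorm_sub_one N] at key
  unfold dirichletNorm
  simp only [hpow]
  linarith

theorem dirichletNorm_le_natCast (N : ℕ) (θ : ℝ) : dirichletNorm N θ ≤ N := by
  refine (norm_sum_le _ _).trans ?_
  simp only [Complex.norm_exp_I_mul_ofReal, Finset.sum_const, Nat.card_Icc]
  simp

@[simp] theorem dirichletNorm_zero_right (N : ℕ) : dirichletNorm N 0 = N := by
  simp [dirichletNorm]

@[simp] theorem dirichletNorm_neg_right (N : ℕ) (θ : ℝ) :
    dirichletNorm N (-θ) = dirichletNorm N θ := by
  rw [dirichletNorm, dirichletNorm, ← Complex.norm_conj, map_sum]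
  congr 1
  refine Finset.sum_congr rfl fun n _ => ?_
  rw [← Complex.exp_conj, map_mul, Complex.conj_I, Complex.conj_ofReal]
  push_cast; ring_nf

theorem dirichletNorm_eq_div_abs_sin {θ : ℝ} (N : ℕ) (hθ : sin θ ≠ 0) :
    dirichletNorm N θ = |sin (N * θ)| / |sin θ| :=
  eq_div_of_mul_eq (abs_ne_zero.2 hθ) (dirichletNorm_mul_abs_sin N θ)

@[simp] theorem dirichletNorm_abs_right (N : ℕ) (θ : ℝ) :
    dirichletNorm N |θ| = dirichletNorm N θ := by
  rcases abs_choice θ with h | h <;> simp [h]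

theorem dirichletNorm_antitoneOn {N : ℕ} {θ₀ : ℝ} (hθ₀ : N * θ₀ < π) :
    AntitoneOn (dirichletNorm N) (Set.Icc 0 θ₀) := by
  rintro x ⟨hx, -⟩ y ⟨-, hy⟩ hxy
  rcases hx.eq_or_lt with rfl | hx
  · simpa using dirichletNorm_le_natCast N y
  rcases Nat.eq_zero_or_pos N with rfl | hN
  · simp [dirichletNorm]
  have hN1 : (1 : ℝ) ≤ N := by exact_mod_cast hN
  have hNy : N * y < π := by nlinarith
  have hsx : 0 < sin x := sin_pos_of_pos_of_lt_pi hx (by nlinarith)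
  have hsy : 0 < sin y := sin_pos_of_pos_of_lt_pi (hx.trans_le hxy) (by nlinarith)
  have hmono := sin_nat_mul_mul_sin_le N hx.le hxy hNy.le
  have hDx := dirichletNorm_mul_abs_sin N x
  have hDy := dirichletNorm_mul_abs_sin N y
  have hsNx : 0 ≤ sin (N * x) := sin_nonneg_of_nonneg_of_le_pi (by positivity) (by nlinarith)
  have hsNy : 0 ≤ sin (N * y) := sin_nonneg_of_nonneg_of_le_pi (by nlinarith) hNy.le
  rw [abs_of_pos hsx, abs_of_nonneg hsNx] at hDx
  rw [abs_of_pos hsy, abs_of_nonneg hsNy] at hDy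
  rw [← hDx, ← hDy] at hmono
  nlinarith [mul_pos hsx hsy]

theorem dirichletNorm_le_of_abs_le {N : ℕ} {θ₀ θ : ℝ} (hθ₀ : N * θ₀ < π) (hθ : |θ| ≤ θ₀) :
    dirichletNorm N θ₀ ≤ dirichletNorm N θ := by
  rw [← dirichletNorm_abs_right N θ]
  exact dirichletNorm_antitoneOn hθ₀ ⟨abs_nonneg θ, hθ⟩ ⟨(abs_nonneg θ).trans hθ, le_rfl⟩ hθ

theorem norm_sum_exp_eq_dirichletNorm (N : ℕ) (lam d : ℝ) :
    ‖∑ n ∈ Finset.Icc 1 N,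
        Complex.exp (Complex.I * ((2 * π / lam) * ((n : ℝ) / (N : ℝ)) * d : ℝ))‖
      = dirichletNorm N (π * d / (N * lam)) := by
  unfold dirichletNorm
  congr 1
  refine Finset.sum_congr rfl fun n _ => ?_
  congr 3
  ring

theorem stmt_6_general (u v : EuclideanSpace ℝ (Fin 3))
    (lam L : ℝ) (N : ℕ) (hN : 0 < N)
    (hpos : 0 < ‖u - v‖ * L) (hsmall : ‖u - v‖ * L < lam)
    (f : EuclideanSpace ℝ (Fin 3) → ℝ)
    (hf : ∀ t, f t = ‖(∑ n ∈ Finset.Icc 1 N,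
        Complex.exp (Complex.I * ((2 * π / lam) * ((n : ℝ) / (N : ℝ))
          * (inner ℝ (u - v) t : ℝ) : ℝ)))‖) :
    (∀ t : EuclideanSpace ℝ (Fin 3), ‖t‖ = L →
        |Real.sin (π * (‖u - v‖ * L) / lam)| / |Real.sin (π * (‖u - v‖ * L) / (N * lam))|
          ≤ f t) ∧
    f ((L / ‖u - v‖) • (u - v))
      = |Real.sin (π * (‖u - v‖ * L) / lam)| / |Real.sin (π * (‖u - v‖ * L) / (N * lam))| ∧
    f (-((L / ‖u - v‖) • (u - v)))
      = |Real.sin (π * (‖u - v‖ * L) / lam)| / |Real.sin (π * (‖u - v‖ * L) / (N * lam))| := by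
  have hlam : 0 < lam := hpos.trans hsmall
  have huv : ‖u - v‖ ≠ 0 := fun h => by simp [h] at hpos
  have hN1 : (1 : ℝ) ≤ N := by exact_mod_cast hN
  simp only [hf, norm_sum_exp_eq_dirichletNorm]
  set θ₀ := π * (‖u - v‖ * L) / (N * lam)
  have hNθ₀ : N * θ₀ = π * (‖u - v‖ * L) / lam := by
    simp only [θ₀]
    field_simp
  have hNθ₀π : N * θ₀ < π := by
    rw [hNθ₀, div_lt_iff₀ hlam]
    nlinarith [pi_pos]
  have hθ₀ : 0 < θ₀ := by positivity
  have hval : dirichletNorm N θ₀ = |sin (π * (‖u - v‖ * L) / lam)| / |sin θ₀| := by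
    rw [← hNθ₀]
    exact dirichletNorm_eq_div_abs_sin N (sin_pos_of_pos_of_lt_pi hθ₀ (by nlinarith)).ne'
  have hinner : inner ℝ (u - v) ((L / ‖u - v‖) • (u - v)) = ‖u - v‖ * L := by
    rw [real_inner_smul_right, real_inner_self_eq_norm_mul_norm]
    field_simp
  refine ⟨fun t ht => ?_, ?_, ?_⟩
  · rw [← hval]
    refine dirichletNorm_le_of_abs_le hNθ₀π ?_
    rw [abs_div, abs_mul, abs_of_pos pi_pos, abs_of_pos (by positivity : (0 : ℝ) < N * lam)]
    simp only [θ₀]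
    gcongr
    exact ht ▸ abs_real_inner_le_norm (u - v) t
  · rw [hinner, hval]
  · rw [inner_neg_right, hinner, mul_neg, neg_div, dirichletNorm_neg_right, hval]

/-- Theorem 1, small-aperture case: if `0 < ‖u-v‖L < λ`, the minimum over the
sphere `‖t‖ = L` of the far-field array response correlation equals
`|sin(π‖u-v‖L/λ)| / |sin(π‖u-v‖L/(Nλ))|`, attained at `t = ±L(u-v)/‖u-v‖`. -/
theorem stmt_6 (u v : EuclideanSpace ℝ (Fin 3)) (hu : ‖u‖ = 1) (hv : ‖v‖ = 1)
    (lam L : ℝ) (hlam : 0 < lam) (N : ℕ) (hN : 0 < N)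
    (hpos : 0 < ‖u - v‖ * L) (hsmall : ‖u - v‖ * L < lam)
    (f : EuclideanSpace ℝ (Fin 3) → ℝ)
    (hf : ∀ t, f t = ‖(∑ n ∈ Finset.Icc 1 N,
        Complex.exp (Complex.I * ((2 * π / lam) * ((n : ℝ) / (N : ℝ))
          * (inner ℝ (u - v) t : ℝ) : ℝ)))‖) :
    (∀ t : EuclideanSpace ℝ (Fin 3), ‖t‖ = L →
        |Real.sin (π * (‖u - v‖ * L) / lam)| / |Real.sin (π * (‖u - v‖ * L) / (N * lam))|
          ≤ f t) ∧
    f ((L / ‖u - v‖) • (u - v))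
      = |Real.sin (π * (‖u - v‖ * L) / lam)| / |Real.sin (π * (‖u - v‖ * L) / (N * lam))| ∧
    f (-((L / ‖u - v‖) • (u - v)))
      = |Real.sin (π * (‖u - v‖ * L) / lam)| / |Real.sin (π * (‖u - v‖ * L) / (N * lam))| :=
  stmt_6_general u v lam L N hN hpos hsmall f hf
end

section
/- (Theorem 2, zero-correlation case) Let u, v ∈ ℝ³ be unit vectors, λ > 0, N ≥ 1, L > 0 with 2((N+1)/N)‖u−v‖L ≥ λ. Then there exist t₁, t₂ ∈ ℝ³ with ‖t₁‖ = ‖t₂‖ = L such that the two-ULA far-field correlation |∑_{n=1}^{N} e^{j(2π/λ)(n/N)(u−v)^T t₁} + ∑_{n=1}^{N} e^{j(2π/λ)(n/N)(u−v)^T t₂}| = 0. -/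
/-!
Take `t₂ = -t₁` with `⟪u - v, t₁⟫ = λN / (2(N + 1))`, so that the two sums have phases `±nθ`
with `θ = π / (N + 1)`. Since `(N + 1 - n)θ = π - nθ`, reflecting `n ↦ N + 1 - n` shows that
the second sum is the negative of the first. Such a `t₁` of norm `L` exists by the intermediate
value theorem: the sphere of radius `L` is connected and `⟪u - v, ·⟫` takes the values
`±‖u - v‖L` on it, and `λN / (2(N + 1)) ≤ ‖u - v‖L` by assumption.
-/

open Real

open Finset in
theorem Finset.sum_Icc_one_reflect {M : Type*} [AddCommMonoid M] (f : ℕ → M) (N : ℕ) :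
    ∑ n ∈ Icc 1 N, f (N + 1 - n) = ∑ n ∈ Icc 1 N, f n := by
  refine sum_nbij' (N + 1 - ·) (N + 1 - ·) ?_ ?_ ?_ ?_ (fun _ _ ↦ rfl) <;>
    intro n hn <;> simp only [mem_Icc] at hn ⊢ <;> omega

theorem sum_Icc_exp_neg_eq_neg_sum {N : ℕ} {θ : ℝ} (hθ : ((N : ℝ) + 1) * θ = π) :
    ∑ n ∈ Finset.Icc 1 N, Complex.exp (Complex.I * ((n * -θ : ℝ) : ℂ)) =
      -∑ n ∈ Finset.Icc 1 N, Complex.exp (Complex.I * ((n * θ : ℝ) : ℂ)) := by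
  rw [← Finset.sum_Icc_one_reflect fun n : ℕ ↦ Complex.exp (Complex.I * ((n * θ : ℝ) : ℂ)),
    ← Finset.sum_neg_distrib]
  refine Finset.sum_congr rfl fun n hn ↦ ?_
  have hnN : n ≤ N + 1 := by simp only [Finset.mem_Icc] at hn; omega
  have hphase : Complex.I * (((N + 1 - n : ℕ) : ℝ) * θ : ℝ) =
      π * Complex.I + Complex.I * ((n * -θ : ℝ) : ℂ) := by
    rw [Nat.cast_sub hnN, ← Complex.ofReal_inj.mpr hθ]
    push_cast
    ring
  rw [hphase, Complex.exp_add, Complex.exp_pi_mul_I, neg_one_mul, neg_neg]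

theorem exists_norm_eq_inner_eq {E : Type*} [NormedAddCommGroup E] [InnerProductSpace ℝ E]
    (hE : 1 < Module.rank ℝ E) {x : E} (hx : x ≠ 0) {L d : ℝ} (hL : 0 ≤ L)
    (hd : |d| ≤ ‖x‖ * L) : ∃ t, ‖t‖ = L ∧ inner ℝ x t = d := by
  set a : E := (L / ‖x‖) • x
  have ha : a ∈ Metric.sphere (0 : E) L := by
    simp [a, norm_smul, abs_of_nonneg hL, norm_ne_zero_iff.mpr hx]
  have hxa : inner ℝ x a = ‖x‖ * L := by
    rw [inner_smul_right, real_inner_self_eq_norm_sq]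
    field_simp [norm_ne_zero_iff.mpr hx]
  obtain ⟨t, ht, hxt⟩ := (isPreconnected_sphere hE 0 L).intermediate_value
    (by simpa using ha : -a ∈ Metric.sphere (0 : E) L) ha
    (continuous_const.inner continuous_id).continuousOn
    (show d ∈ Set.Icc (inner ℝ x (-a)) (inner ℝ x a) by
      rw [inner_neg_right, hxa]; exact abs_le.mp hd)
  exact ⟨t, mem_sphere_zero_iff_norm.mp ht, hxt⟩

theorem stmt_10_general (u v : EuclideanSpace ℝ (Fin 3))
    (lam L : ℝ) (hlam : 0 < lam) (hL : 0 < L) (N : ℕ) (hN : 1 ≤ N)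
    (hcond : lam ≤ 2 * (((N : ℝ) + 1) / (N : ℝ)) * ‖u - v‖ * L) :
    ∃ t₁ t₂ : EuclideanSpace ℝ (Fin 3), ‖t₁‖ = L ∧ ‖t₂‖ = L ∧
      ‖(∑ n ∈ Finset.Icc 1 N,
            Complex.exp (Complex.I * ((2 * π / lam) * ((n : ℝ) / (N : ℝ))
              * (inner ℝ (u - v) t₁ : ℝ) : ℝ)))
          + ∑ n ∈ Finset.Icc 1 N,
              Complex.exp (Complex.I * ((2 * π / lam) * ((n : ℝ) / (N : ℝ))
                * (inner ℝ (u - v) t₂ : ℝ) : ℝ))‖ = 0 := by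
  have hN₀ : (0 : ℝ) < N := by exact_mod_cast hN
  have huv : u - v ≠ 0 := by
    rintro h
    rw [h, norm_zero] at hcond
    linarith
  have hrank : 1 < Module.rank ℝ (EuclideanSpace ℝ (Fin 3)) := by
    rw [← Module.finrank_eq_rank, finrank_euclideanSpace_fin]
    norm_num
  obtain ⟨t, htL, hphase⟩ := exists_norm_eq_inner_eq hrank huv hL.le
    (d := lam / (2 * ((N + 1) / N))) <| by
      rw [abs_of_pos (by positivity), div_le_iff₀ (by positivity)]
      linarith
  refine ⟨t, -t, htL, by rwa [norm_neg], ?_⟩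
  have hθ : ∀ n : ℕ, (2 * π / lam) * ((n : ℝ) / N) * inner ℝ (u - v) t = n * (π / (N + 1)) := by
    intro n
    rw [hphase]
    field_simp
  simp_rw [inner_neg_right, mul_neg, hθ, ← mul_neg]
  rw [sum_Icc_exp_neg_eq_neg_sum (by field_simp), add_neg_cancel, norm_zero]

/-- Theorem 2, zero-correlation case: if `2((N+1)/N)‖u-v‖L ≥ λ`, there exist
two drone positions `t₁, t₂` on the sphere of radius `L` making the two-ULA
far-field correlation vanish. -/
theorem stmt_10 (u v : EuclideanSpace ℝ (Fin 3)) (hu : ‖u‖ = 1) (hv : ‖v‖ = 1)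
    (lam L : ℝ) (hlam : 0 < lam) (hL : 0 < L) (N : ℕ) (hN : 1 ≤ N)
    (hcond : lam ≤ 2 * (((N : ℝ) + 1) / (N : ℝ)) * ‖u - v‖ * L) :
    ∃ t₁ t₂ : EuclideanSpace ℝ (Fin 3), ‖t₁‖ = L ∧ ‖t₂‖ = L ∧
      ‖(∑ n ∈ Finset.Icc 1 N,
            Complex.exp (Complex.I * ((2 * π / lam) * ((n : ℝ) / (N : ℝ))
              * (inner ℝ (u - v) t₁ : ℝ) : ℝ)))
          + ∑ n ∈ Finset.Icc 1 N,
              Complex.exp (Complex.I * ((2 * π / lam) * ((n : ℝ) / (N : ℝ))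
                * (inner ℝ (u - v) t₂ : ℝ) : ℝ))‖ = 0 :=
  stmt_10_general u v lam L hlam hL N hN hcond
end

section
/- (Theorem 3 structure) Let r̂ ∈ ℝ³ be a unit vector, λ > 0, N ≥ 1, L > 0, and let c = (1/‖r_e‖ − 1/‖r_u‖) > 0 with cL² < λ. Define g(a) = |∑_{n=1}^{N} exp(j·(π/λ)·c·(n²/N²)·a)| for a ∈ [0, L²]. Then g is decreasing on [0, L²], and hence the minimum over t with ‖t‖ = L of the same-direction correlation f_sd(t) = g(L² − (r̂^T t)²) equals g(L²) = |∑_{n=1}^{N} exp(j·(π/λ)·c·(n²/N²)·L²)|, attained when r̂^T t = 0. -/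
/-!
Expanding the square, `‖∑ₙ exp(i wₙ a)‖² = ∑ₙ ∑ₘ cos((wₙ - wₘ) a)`. The condition `c L² < λ`
keeps every phase difference `|wₙ - wₘ| a` inside `[0, π]` for `a ∈ [0, L²]`, where `cos` is
decreasing, so each term, and hence the whole sum, decreases in `a`. Cauchy–Schwarz puts
`L² - (r̂ᵀt)²` in `[0, L²]` on the sphere `‖t‖ = L`.
-/

open Real

theorem norm_sum_exp_sq {ι : Type*} (s : Finset ι) (θ : ι → ℝ) :
    ‖∑ n ∈ s, Complex.exp (Complex.I * (θ n : ℂ))‖ ^ 2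
      = ∑ n ∈ s, ∑ m ∈ s, cos (θ n - θ m) := by
  have norm_sq_eq : ∀ z : ℂ, ‖z‖ ^ 2 = (z * (starRingEnd ℂ) z).re := fun z => by
    rw [Complex.mul_conj', ← Complex.ofReal_pow, Complex.ofReal_re]
  rw [norm_sq_eq, map_sum, Finset.sum_mul_sum, Complex.re_sum]
  refine Finset.sum_congr rfl fun n _ => ?_
  rw [Complex.re_sum]
  refine Finset.sum_congr rfl fun m _ => ?_
  rw [← Complex.exp_conj, ← Complex.exp_add, ← Complex.exp_ofReal_mul_I_re]
  congr 2
  simp only [map_mul, Complex.conj_I, Complex.conj_ofReal, Complex.ofReal_sub]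
  ring

theorem cos_mul_le_cos_mul (d : ℝ) {a b : ℝ} (ha : 0 ≤ a) (hab : a ≤ b) (hb : |d| * b ≤ π) :
    cos (d * b) ≤ cos (d * a) := by
  have cos_eq : ∀ x, 0 ≤ x → cos (d * x) = cos (|d| * x) := fun x hx => by
    rw [← cos_abs, abs_mul, abs_of_nonneg hx]
  rw [cos_eq a ha, cos_eq b (ha.trans hab)]
  exact cos_le_cos_of_nonneg_of_le_pi (by positivity) hb (by gcongr)

theorem antitoneOn_norm_sum_exp {ι : Type*} (s : Finset ι) (w : ι → ℝ) {A : ℝ}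
    (hw : ∀ n ∈ s, ∀ m ∈ s, |w n - w m| * A ≤ π) :
    AntitoneOn (fun a : ℝ => ‖∑ n ∈ s, Complex.exp (Complex.I * ((w n * a : ℝ) : ℂ))‖)
      (Set.Icc 0 A) := by
  rintro a ⟨ha, -⟩ b ⟨-, hbA⟩ hab
  refine le_of_pow_le_pow_left₀ two_ne_zero (norm_nonneg _) ?_
  simp only [norm_sum_exp_sq, ← sub_mul]
  gcongr with n hn m hm
  exact cos_mul_le_cos_mul _ ha hab
    ((mul_le_mul_of_nonneg_left hbA (abs_nonneg _)).trans (hw n hn m hm))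

theorem natCast_sq_div_sq_mem_Icc {n N : ℕ} (h : n ≤ N) :
    (n : ℝ) ^ 2 / (N : ℝ) ^ 2 ∈ Set.Icc (0 : ℝ) 1 :=
  ⟨by positivity, div_le_one_of_le₀ (by gcongr) (sq_nonneg _)⟩

theorem abs_mul_sub_mul_le {k x y : ℝ} (hk : 0 ≤ k) (hx : x ∈ Set.Icc (0 : ℝ) 1)
    (hy : y ∈ Set.Icc (0 : ℝ) 1) : |k * x - k * y| ≤ k := by
  rw [← mul_sub, abs_mul, abs_of_nonneg hk]
  exact mul_le_of_le_one_right hk (abs_sub_le_of_nonneg_of_le hx.1 hx.2 hy.1 hy.2)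

theorem stmt_13_general (rhat : EuclideanSpace ℝ (Fin 3)) (hr : ‖rhat‖ = 1)
    (lam L c : ℝ) (hlam : 0 < lam) (N : ℕ)
    (hc : 0 < c) (hcL : c * L ^ 2 < lam)
    (g : ℝ → ℝ)
    (hg : ∀ a, g a = ‖(∑ n ∈ Finset.Icc 1 N,
        Complex.exp (Complex.I * ((π / lam) * c * ((n : ℝ) ^ 2 / (N : ℝ) ^ 2) * a : ℝ)))‖) :
    AntitoneOn g (Set.Icc 0 (L ^ 2)) ∧
    (∀ t : EuclideanSpace ℝ (Fin 3), ‖t‖ = L →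
        g (L ^ 2) ≤ g (L ^ 2 - (inner ℝ rhat t : ℝ) ^ 2)) ∧
    (∀ t : EuclideanSpace ℝ (Fin 3), ‖t‖ = L → (inner ℝ rhat t : ℝ) = 0 →
        g (L ^ 2 - (inner ℝ rhat t : ℝ) ^ 2) = g (L ^ 2)) := by
  have phase_gap : ∀ n ∈ Finset.Icc 1 N, ∀ m ∈ Finset.Icc 1 N,
      |π / lam * c * ((n : ℝ) ^ 2 / (N : ℝ) ^ 2) - π / lam * c * ((m : ℝ) ^ 2 / (N : ℝ) ^ 2)|
        * L ^ 2 ≤ π := by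
    intro n hn m hm
    calc _ ≤ π / lam * c * L ^ 2 := by
          gcongr
          exact abs_mul_sub_mul_le (by positivity)
            (natCast_sq_div_sq_mem_Icc (Finset.mem_Icc.1 hn).2)
            (natCast_sq_div_sq_mem_Icc (Finset.mem_Icc.1 hm).2)
      _ = π * (c * L ^ 2 / lam) := by ring
      _ ≤ π := mul_le_of_le_one_right pi_pos.le ((div_le_one hlam).2 hcL.le)
  have hanti : AntitoneOn g (Set.Icc 0 (L ^ 2)) := by
    rw [show g = _ from funext hg]
    exact antitoneOn_norm_sum_exp _ _ phase_gap
  refine ⟨hanti, fun t ht => ?_, fun t _ h0 => by rw [h0, zero_pow two_ne_zero, sub_zero]⟩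
  have inner_sq_le : (inner ℝ rhat t : ℝ) ^ 2 ≤ L ^ 2 := by
    refine sq_le_sq.2 ((abs_real_inner_le_norm rhat t).trans ?_)
    rw [hr, ht, one_mul]
    exact le_abs_self L
  exact hanti ⟨sub_nonneg.2 inner_sq_le, sub_le_self _ (sq_nonneg _)⟩
    ⟨sq_nonneg L, le_rfl⟩ (sub_le_self _ (sq_nonneg _))

/-- Theorem 3 structure: with `c = 1/‖r_e‖ - 1/‖r_u‖ > 0` and `cL² < λ`, the
function `g(a) = |∑_{n=1}^N exp(j(π/λ)c(n²/N²)a)|` is decreasing on `[0, L²]`;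
hence the same-direction correlation `f_sd(t) = g(L² - (r̂ᵀt)²)` over the
sphere `‖t‖ = L` is minimized, with value `g(L²)`, exactly when `r̂ᵀt = 0`. -/
theorem stmt_13 (rhat : EuclideanSpace ℝ (Fin 3)) (hr : ‖rhat‖ = 1)
    (lam L c : ℝ) (hlam : 0 < lam) (hL : 0 < L) (N : ℕ) (hN : 1 ≤ N)
    (hc : 0 < c) (hcL : c * L ^ 2 < lam)
    (g : ℝ → ℝ)
    (hg : ∀ a, g a = ‖(∑ n ∈ Finset.Icc 1 N,
        Complex.exp (Complex.I * ((π / lam) * c * ((n : ℝ) ^ 2 / (N : ℝ) ^ 2) * a : ℝ)))‖) :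
    AntitoneOn g (Set.Icc 0 (L ^ 2)) ∧
    (∀ t : EuclideanSpace ℝ (Fin 3), ‖t‖ = L →
        g (L ^ 2) ≤ g (L ^ 2 - (inner ℝ rhat t : ℝ) ^ 2)) ∧
    (∀ t : EuclideanSpace ℝ (Fin 3), ‖t‖ = L → (inner ℝ rhat t : ℝ) = 0 →
        g (L ^ 2 - (inner ℝ rhat t : ℝ) ^ 2) = g (L ^ 2)) :=
  stmt_13_general rhat hr lam L c hlam N hc hcL g hg
end
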